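/- Let U ⊆ ℝ^d be open and let x₀ ∈ U. Let W : U → Matrix (Fin n) (Fin r) ℂ, G_μ : U → Matrix (Fin n) (Fin n) ℂ (Hermitian valued), and A_μ : U → Matrix (Fin r) (Fin r) ℂ (anti-Hermitian valued) be twice continuously differentiable with ∂_μ W = G_μ W − W (A_μ)ᵀ on U for every μ. Suppose W(x₀) = Σ_{k=1}^r √λ_k φ_k (e_k)† where λ_1,…,λ_r > 0 and φ_1,…,φ_r is an orthonormal family in ℂⁿ. Let g ∈ Matrix (Fin d) (Fin d) ℝ be symmetric positive definite with inverse entries g^{μν}, and set F_{μν} := ∂_μ A_ν − ∂_ν A_μ + [A_μ, A_ν] evaluated at x₀. Then −(1/4) Σ_{μ,ν,α,β=1}^d g^{μα} g^{νβ} tr(F_{μν} F_{αβ}) = − Σ_{μ,ν,α,β=1}^d g^{μα} g^{νβ} Σ_{ℓ,m=1}^r (λ_ℓ λ_m/(λ_ℓ + λ_m)²) ⟨φ_ℓ, [G_μ(x₀), G_ν(x₀)] φ_m⟩ ⟨φ_m, [G_α(x₀), G_β(x₀)] φ_ℓ⟩. -/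

import Mathlib

open Matrix

/-- The partial derivative `∂_μ` of a matrix-valued function on `ℝ^d`, taken entrywise. -/
noncomputable def matPDeriv {d n m : ℕ} (μ : Fin d)
    (f : (Fin d → ℝ) → Matrix (Fin n) (Fin m) ℂ) (x : Fin d → ℝ) :
    Matrix (Fin n) (Fin m) ℂ :=
  Matrix.of fun i j => fderiv ℝ (fun y => f y i j) x (Pi.single μ 1)

/-! Differentiating the lift equation once more and antisymmetrising in `μ, ν` (mixed partials
of `W` commute) gives `W Fᵀ = (∂_μ G_ν − ∂_ν G_μ) W − [G_μ, G_ν] W`. Multiplying by `W†` on the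
left, and the adjoint of the same identity by `W` on the right, the Hermitian term
`∂_μ G_ν − ∂_ν G_μ` cancels and leaves the Sylvester equation `Λ Fᵀ + Fᵀ Λ = −2 W† [G_μ, G_ν] W`
with `Λ = W†W = diag λ` at `x₀`. Hence
`F_{lk} = −2 √(λ_k λ_l) / (λ_k + λ_l) ⟨φ_k, [G_μ, G_ν] φ_l⟩`, and `tr (F_{μν} F_{αβ})` is the
double sum of products of these entries. -/

open Filter Topology

theorem fderiv_fderiv_apply_comm {E F : Type*} [NormedAddCommGroup E] [NormedSpace ℝ E]
    [NormedAddCommGroup F] [NormedSpace ℝ F] {f : E → F} {x₀ : E}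
    (hf : ContDiffAt ℝ 2 f x₀) (v w : E) :
    fderiv ℝ (fun x => fderiv ℝ f x v) x₀ w = fderiv ℝ (fun x => fderiv ℝ f x w) x₀ v := by
  have hdf : DifferentiableAt ℝ (fderiv ℝ f) x₀ :=
    (hf.fderiv_right (m := 1) le_rfl).differentiableAt one_ne_zero
  have hdir : ∀ u z, fderiv ℝ (fun x => fderiv ℝ f x u) x₀ z = fderiv ℝ (fderiv ℝ f) x₀ z u :=
    fun u z => by simp [fderiv_clm_apply hdf (differentiableAt_const u)]
  rw [hdir, hdir, (hf.isSymmSndFDerivAt (by simp)).eq]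

section MatPDeriv

variable {d n m p : ℕ} {x₀ : Fin d → ℝ}

theorem matPDeriv_congr_of_eventuallyEq (μ : Fin d)
    {P Q : (Fin d → ℝ) → Matrix (Fin n) (Fin m) ℂ} (h : P =ᶠ[𝓝 x₀] Q) :
    matPDeriv μ P x₀ = matPDeriv μ Q x₀ := by
  ext i j
  simp only [matPDeriv, of_apply]
  have hij : (fun y => P y i j) =ᶠ[𝓝 x₀] fun y => Q y i j := h.mono fun x hx => congrFun₂ hx i j
  rw [hij.fderiv_eq]

theorem matPDeriv_neg (μ : Fin d) (P : (Fin d → ℝ) → Matrix (Fin n) (Fin m) ℂ) :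
    matPDeriv μ (fun x => -P x) x₀ = -matPDeriv μ P x₀ := by
  ext i j
  simp [matPDeriv, fderiv_fun_neg]

theorem matPDeriv_sub (μ : Fin d) {P Q : (Fin d → ℝ) → Matrix (Fin n) (Fin m) ℂ}
    (hP : ∀ i j, DifferentiableAt ℝ (fun x => P x i j) x₀)
    (hQ : ∀ i j, DifferentiableAt ℝ (fun x => Q x i j) x₀) :
    matPDeriv μ (fun x => P x - Q x) x₀ = matPDeriv μ P x₀ - matPDeriv μ Q x₀ := by
  ext i j
  simp [matPDeriv, fderiv_fun_sub (hP i j) (hQ i j)]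

theorem differentiableAt_mul_apply {P : (Fin d → ℝ) → Matrix (Fin n) (Fin m) ℂ}
    {Q : (Fin d → ℝ) → Matrix (Fin m) (Fin p) ℂ}
    (hP : ∀ i j, DifferentiableAt ℝ (fun x => P x i j) x₀)
    (hQ : ∀ i j, DifferentiableAt ℝ (fun x => Q x i j) x₀) (i : Fin n) (j : Fin p) :
    DifferentiableAt ℝ (fun x => (P x * Q x) i j) x₀ := by
  simp only [mul_apply]
  exact DifferentiableAt.fun_sum fun k _ => (hP i k).mul (hQ k j)

theorem matPDeriv_mul (μ : Fin d) {P : (Fin d → ℝ) → Matrix (Fin n) (Fin m) ℂ}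
    {Q : (Fin d → ℝ) → Matrix (Fin m) (Fin p) ℂ}
    (hP : ∀ i j, DifferentiableAt ℝ (fun x => P x i j) x₀)
    (hQ : ∀ i j, DifferentiableAt ℝ (fun x => Q x i j) x₀) :
    matPDeriv μ (fun x => P x * Q x) x₀ = matPDeriv μ P x₀ * Q x₀ + P x₀ * matPDeriv μ Q x₀ := by
  ext i j
  simp only [matPDeriv, of_apply, Matrix.add_apply, mul_apply]
  rw [fderiv_fun_sum (A := fun k y => P y i k * Q y k j) fun k _ => (hP i k).mul (hQ k j),
    ← Finset.sum_add_distrib]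
  simp only [FunLike.coe_sum, Finset.sum_apply]
  refine Finset.sum_congr rfl fun k _ => ?_
  simp [fderiv_fun_mul (hP i k) (hQ k j), mul_comm]
  ring

theorem matPDeriv_transpose (μ : Fin d) (P : (Fin d → ℝ) → Matrix (Fin n) (Fin m) ℂ) :
    matPDeriv μ (fun x => (P x)ᵀ) x₀ = (matPDeriv μ P x₀)ᵀ :=
  rfl

theorem matPDeriv_conjTranspose (μ : Fin d) (P : (Fin d → ℝ) → Matrix (Fin n) (Fin m) ℂ) :
    matPDeriv μ (fun x => (P x)ᴴ) x₀ = (matPDeriv μ P x₀)ᴴ := by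
  ext i j
  exact congrArg (· (Pi.single μ 1)) (Complex.conjCLE.comp_fderiv (f := fun x => P x j i))

theorem matPDeriv_comm (μ ν : Fin d) {P : (Fin d → ℝ) → Matrix (Fin n) (Fin m) ℂ}
    (hP : ∀ i j, ContDiffAt ℝ 2 (fun x => P x i j) x₀) :
    matPDeriv ν (matPDeriv μ P) x₀ = matPDeriv μ (matPDeriv ν P) x₀ := by
  ext i j
  exact fderiv_fderiv_apply_comm (hP i j) _ _

theorem isHermitian_matPDeriv (μ : Fin d) {P : (Fin d → ℝ) → Matrix (Fin n) (Fin n) ℂ}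
    (hP : ∀ᶠ x in 𝓝 x₀, (P x).IsHermitian) : (matPDeriv μ P x₀).IsHermitian := by
  rw [IsHermitian, ← matPDeriv_conjTranspose]
  exact matPDeriv_congr_of_eventuallyEq μ (hP.mono fun x hx => hx.eq)

theorem conjTranspose_matPDeriv_of_antiHermitian (μ : Fin d)
    {P : (Fin d → ℝ) → Matrix (Fin n) (Fin n) ℂ} (hP : ∀ᶠ x in 𝓝 x₀, (P x)ᴴ = -P x) :
    (matPDeriv μ P x₀)ᴴ = -matPDeriv μ P x₀ := by
  rw [← matPDeriv_conjTranspose, ← matPDeriv_neg]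
  exact matPDeriv_congr_of_eventuallyEq μ hP

end MatPDeriv

noncomputable def curvature {d r : ℕ} (A : Fin d → (Fin d → ℝ) → Matrix (Fin r) (Fin r) ℂ)
    (μ ν : Fin d) (x : Fin d → ℝ) : Matrix (Fin r) (Fin r) ℂ :=
  matPDeriv μ (A ν) x - matPDeriv ν (A μ) x + (A μ x * A ν x - A ν x * A μ x)

section Lift

variable {d n r : ℕ} {x₀ : Fin d → ℝ} {W : (Fin d → ℝ) → Matrix (Fin n) (Fin r) ℂ}
  {G : Fin d → (Fin d → ℝ) → Matrix (Fin n) (Fin n) ℂ}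
  {A : Fin d → (Fin d → ℝ) → Matrix (Fin r) (Fin r) ℂ}

theorem conjTranspose_curvature
    (hA : ∀ μ, ∀ᶠ x in 𝓝 x₀, (A μ x)ᴴ = -A μ x) (μ ν : Fin d) :
    (curvature A μ ν x₀)ᴴ = -curvature A μ ν x₀ := by
  simp only [curvature, conjTranspose_add, conjTranspose_sub, conjTranspose_mul,
    conjTranspose_matPDeriv_of_antiHermitian _ (hA _), (hA _).self_of_nhds]
  noncomm_ring

theorem matPDeriv_matPDeriv_of_lift
    (hW : ∀ i j, DifferentiableAt ℝ (fun x => W x i j) x₀)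
    (hG : ∀ μ i j, DifferentiableAt ℝ (fun x => G μ x i j) x₀)
    (hA : ∀ μ i j, DifferentiableAt ℝ (fun x => A μ x i j) x₀)
    (hlift : ∀ μ, ∀ᶠ x in 𝓝 x₀, matPDeriv μ W x = G μ x * W x - W x * (A μ x)ᵀ) (μ ν : Fin d) :
    matPDeriv ν (matPDeriv μ W) x₀
      = matPDeriv ν (G μ) x₀ * W x₀ + G μ x₀ * (G ν x₀ * W x₀ - W x₀ * (A ν x₀)ᵀ)
        - ((G ν x₀ * W x₀ - W x₀ * (A ν x₀)ᵀ) * (A μ x₀)ᵀ + W x₀ * (matPDeriv ν (A μ) x₀)ᵀ) := by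
  have hAt : ∀ i j, DifferentiableAt ℝ (fun x => (A μ x)ᵀ i j) x₀ := fun i j => hA μ j i
  rw [matPDeriv_congr_of_eventuallyEq ν (hlift μ),
    matPDeriv_sub ν (differentiableAt_mul_apply (hG μ) hW) (differentiableAt_mul_apply hW hAt),
    matPDeriv_mul ν (hG μ) hW, matPDeriv_mul ν hW hAt, matPDeriv_transpose,
    (hlift ν).self_of_nhds]

theorem mul_transpose_curvature_of_lift
    (hW : ∀ i j, ContDiffAt ℝ 2 (fun x => W x i j) x₀)
    (hG : ∀ μ i j, DifferentiableAt ℝ (fun x => G μ x i j) x₀)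
    (hA : ∀ μ i j, DifferentiableAt ℝ (fun x => A μ x i j) x₀)
    (hlift : ∀ μ, ∀ᶠ x in 𝓝 x₀, matPDeriv μ W x = G μ x * W x - W x * (A μ x)ᵀ) (μ ν : Fin d) :
    W x₀ * (curvature A μ ν x₀)ᵀ
      = (matPDeriv μ (G ν) x₀ - matPDeriv ν (G μ) x₀) * W x₀
        - (G μ x₀ * G ν x₀ - G ν x₀ * G μ x₀) * W x₀ := by
  have hW' : ∀ i j, DifferentiableAt ℝ (fun x => W x i j) x₀ :=
    fun i j => (hW i j).differentiableAt two_ne_zero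
  have h := matPDeriv_comm μ ν hW
  rw [matPDeriv_matPDeriv_of_lift hW' hG hA hlift, matPDeriv_matPDeriv_of_lift hW' hG hA hlift,
    ← sub_eq_zero] at h
  rw [← sub_eq_zero, ← h, curvature]
  simp only [transpose_add, transpose_sub, transpose_mul, Matrix.mul_add,
    Matrix.mul_sub, Matrix.sub_mul, Matrix.mul_assoc]
  abel

end Lift

section Sylvester

variable {R ι κ : Type*} [CommRing R] [StarRing R] [Fintype ι] [Fintype κ]

theorem sylvester_of_mul_transpose_eq {W : Matrix ι κ R} {X C : Matrix ι ι R}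
    {F : Matrix κ κ R} (hX : X.IsHermitian) (hC : Cᴴ = -C) (hF : Fᴴ = -F)
    (h : W * Fᵀ = X * W - C * W) :
    Wᴴ * W * Fᵀ + Fᵀ * (Wᴴ * W) = -((2 : R) • (Wᴴ * C * W)) := by
  have hleft : Wᴴ * W * Fᵀ = Wᴴ * X * W - Wᴴ * C * W := by
    rw [Matrix.mul_assoc, h, Matrix.mul_sub, Matrix.mul_assoc, Matrix.mul_assoc]
  have hright : -(Fᵀ * Wᴴ) = Wᴴ * X + Wᴴ * C := by
    have := congrArg conjTranspose h
    rw [conjTranspose_mul, conjTranspose_sub, conjTranspose_mul, conjTranspose_mul, hX.eq, hC,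
      conjTranspose_transpose_eq_transpose_conjTranspose, hF] at this
    simpa [Matrix.neg_mul, Matrix.mul_neg] using this
  rw [hleft, ← Matrix.mul_assoc, ← neg_neg (Fᵀ * Wᴴ), hright]
  simp only [Matrix.neg_mul, Matrix.add_mul, Matrix.mul_assoc, two_smul]
  abel

theorem add_mul_apply_of_mul_transpose_eq [DecidableEq κ] {W : Matrix ι κ R} {X C : Matrix ι ι R}
    {F : Matrix κ κ R} {lam : κ → R} (hX : X.IsHermitian) (hC : Cᴴ = -C) (hF : Fᴴ = -F)
    (h : W * Fᵀ = X * W - C * W) (hW : Wᴴ * W = diagonal lam) (k l : κ) :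
    (lam k + lam l) * F l k = -(2 * (Wᴴ * C * W) k l) := by
  have := congrFun₂ (sylvester_of_mul_transpose_eq hX hC hF h) k l
  rw [hW] at this
  simpa [diagonal_mul, mul_diagonal, mul_add, mul_comm] using this

end Sylvester

section Columns

variable {ι κ : Type*} [Fintype ι] (c : κ → ℝ) (φ : κ → ι → ℂ)

theorem conjTranspose_mul_mul_apply_of_columns (M : Matrix ι ι ℂ) (k l : κ) :
    ((of fun i k => (c k : ℂ) * φ k i)ᴴ * M * of fun i k => (c k : ℂ) * φ k i) k l
      = c k * c l * (star (φ k) ⬝ᵥ M *ᵥ φ l) := by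
  simp only [mul_apply, conjTranspose_apply, of_apply, dotProduct, mulVec, Pi.star_apply,
    star_mul', Complex.star_def, Complex.conj_ofReal, Finset.mul_sum, Finset.sum_mul]
  rw [Finset.sum_comm]
  exact Finset.sum_congr rfl fun i _ => Finset.sum_congr rfl fun j _ => by ring

theorem conjTranspose_mul_self_of_orthonormal [DecidableEq κ]
    (hφ : ∀ k l, star (φ k) ⬝ᵥ φ l = if k = l then (1 : ℂ) else 0) :
    (of fun i k => (c k : ℂ) * φ k i)ᴴ * (of fun i k => (c k : ℂ) * φ k i)
      = diagonal fun k => ((c k ^ 2 : ℝ) : ℂ) := by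
  classical
  ext k l
  have h := conjTranspose_mul_mul_apply_of_columns c φ 1 k l
  rw [Matrix.mul_one, one_mulVec, hφ] at h
  rw [h, diagonal_apply]
  split_ifs with hkl
  · subst hkl; push_cast; ring
  · simp

end Columns

theorem trace_mul_of_add_mul_apply {κ : Type*} [Fintype κ] {lam : κ → ℝ}
    (hlam : ∀ k, 0 < lam k) {F F' : Matrix κ κ ℂ} {a b : κ → κ → ℂ}
    (hF : ∀ k l, ((lam k : ℂ) + lam l) * F l k = -(2 * ((√(lam k) : ℂ) * √(lam l) * a k l)))
    (hF' : ∀ k l, ((lam k : ℂ) + lam l) * F' l k = -(2 * ((√(lam k) : ℂ) * √(lam l) * b k l))) :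
    trace (F * F') = 4 * ∑ ℓ, ∑ m,
      ((lam ℓ * lam m / (lam ℓ + lam m) ^ 2 : ℝ) : ℂ) * a ℓ m * b m ℓ := by
  simp only [trace, diag_apply, mul_apply, Finset.mul_sum]
  rw [Finset.sum_comm]
  refine Finset.sum_congr rfl fun ℓ _ => Finset.sum_congr rfl fun m _ => ?_
  have hsum : ((lam ℓ : ℂ) + lam m) ≠ 0 := by exact_mod_cast (add_pos (hlam ℓ) (hlam m)).ne'
  have hsqrt : ∀ k, ((√(lam k) : ℂ)) ^ 2 = lam k := fun k => by
    exact_mod_cast Real.sq_sqrt (hlam k).le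
  have h := congrArg₂ (· * ·) (hF ℓ m) (hF' m ℓ)
  push_cast
  field_simp
  linear_combination h + 4 * a ℓ m * b m ℓ * ((√(lam m) : ℂ) ^ 2 * hsqrt ℓ + lam ℓ * hsqrt m)

theorem curvature_measure_spectral_decomposition_general {d n r : ℕ}
    (U : Set (Fin d → ℝ)) (hU : IsOpen U) (x₀ : Fin d → ℝ) (hx₀ : x₀ ∈ U)
    (W : (Fin d → ℝ) → Matrix (Fin n) (Fin r) ℂ)
    (G : Fin d → (Fin d → ℝ) → Matrix (Fin n) (Fin n) ℂ)
    (A : Fin d → (Fin d → ℝ) → Matrix (Fin r) (Fin r) ℂ)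
    (hWC2 : ∀ i j, ContDiffOn ℝ 2 (fun x => W x i j) U)
    (hGC2 : ∀ μ i j, ContDiffOn ℝ 2 (fun x => G μ x i j) U)
    (hAC2 : ∀ μ i j, ContDiffOn ℝ 2 (fun x => A μ x i j) U)
    (hGHerm : ∀ μ, ∀ x ∈ U, (G μ x).IsHermitian)
    (hAAnti : ∀ μ, ∀ x ∈ U, (A μ x)ᴴ = -(A μ x))
    (hlift : ∀ μ, ∀ x ∈ U, matPDeriv μ W x = G μ x * W x - W x * (A μ x)ᵀ)
    (lam : Fin r → ℝ) (hlam : ∀ k, 0 < lam k)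
    (φ : Fin r → (Fin n → ℂ))
    (hortho : ∀ k l, star (φ k) ⬝ᵥ φ l = if k = l then (1 : ℂ) else 0)
    (hW₀ : W x₀ = Matrix.of fun i k => (Real.sqrt (lam k) : ℂ) * φ k i)
    (g : Matrix (Fin d) (Fin d) ℝ) :
    -(1/4 : ℂ) * ∑ μ : Fin d, ∑ ν : Fin d, ∑ α : Fin d, ∑ β : Fin d,
        ((g⁻¹ μ α : ℝ) : ℂ) * ((g⁻¹ ν β : ℝ) : ℂ) *
          Matrix.trace
            ((matPDeriv μ (A ν) x₀ - matPDeriv ν (A μ) x₀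
                + (A μ x₀ * A ν x₀ - A ν x₀ * A μ x₀)) *
             (matPDeriv α (A β) x₀ - matPDeriv β (A α) x₀
                + (A α x₀ * A β x₀ - A β x₀ * A α x₀)))
      = -∑ μ : Fin d, ∑ ν : Fin d, ∑ α : Fin d, ∑ β : Fin d,
          ((g⁻¹ μ α : ℝ) : ℂ) * ((g⁻¹ ν β : ℝ) : ℂ) *
            ∑ ℓ : Fin r, ∑ m : Fin r,
              ((lam ℓ * lam m / (lam ℓ + lam m) ^ 2 : ℝ) : ℂ) *
                (star (φ ℓ) ⬝ᵥ (G μ x₀ * G ν x₀ - G ν x₀ * G μ x₀).mulVec (φ m)) *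
                (star (φ m) ⬝ᵥ (G α x₀ * G β x₀ - G β x₀ * G α x₀).mulVec (φ ℓ)) := by
  have hU₀ : U ∈ 𝓝 x₀ := hU.mem_nhds hx₀
  have hGHerm₀ : ∀ μ, ∀ᶠ x in 𝓝 x₀, (G μ x).IsHermitian :=
    fun μ => eventually_of_mem hU₀ (hGHerm μ)
  have hstruct := mul_transpose_curvature_of_lift (fun i j => (hWC2 i j).contDiffAt hU₀)
    (fun μ i j => ((hGC2 μ i j).contDiffAt hU₀).differentiableAt two_ne_zero)
    (fun μ i j => ((hAC2 μ i j).contDiffAt hU₀).differentiableAt two_ne_zero)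
    (fun μ => eventually_of_mem hU₀ (hlift μ))
  have hgram : (W x₀)ᴴ * W x₀ = diagonal fun k => (lam k : ℂ) := by
    rw [hW₀, conjTranspose_mul_self_of_orthonormal _ φ hortho]
    simp [Real.sq_sqrt (hlam _).le]
  have hentry : ∀ μ ν k l, ((lam k : ℂ) + lam l) * curvature A μ ν x₀ l k
      = -(2 * ((√(lam k) : ℂ) * √(lam l) *
          (star (φ k) ⬝ᵥ (G μ x₀ * G ν x₀ - G ν x₀ * G μ x₀) *ᵥ φ l))) := by
    intro μ ν k l
    have hcomm : (G μ x₀ * G ν x₀ - G ν x₀ * G μ x₀)ᴴ = -(G μ x₀ * G ν x₀ - G ν x₀ * G μ x₀) := by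
      simp only [conjTranspose_sub, conjTranspose_mul, (hGHerm μ x₀ hx₀).eq,
        (hGHerm ν x₀ hx₀).eq, neg_sub]
    rw [add_mul_apply_of_mul_transpose_eq
      ((isHermitian_matPDeriv μ (hGHerm₀ ν)).sub (isHermitian_matPDeriv ν (hGHerm₀ μ))) hcomm
      (conjTranspose_curvature (fun μ => eventually_of_mem hU₀ (hAAnti μ)) μ ν) (hstruct μ ν) hgram,
      hW₀, conjTranspose_mul_mul_apply_of_columns]
  have htrace := fun μ ν α β => trace_mul_of_add_mul_apply hlam (hentry μ ν) (hentry α β)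
  simp only [curvature] at htrace
  simp only [htrace, mul_left_comm _ (4 : ℂ), ← Finset.mul_sum]
  ring

/-- Theorem 1 of the paper. For a purification amplitude `W` satisfying the
Uhlmann horizontal-lift equation `∂_μ W = G_μ W − W (A_μ)ᵀ` (with `G_μ` Hermitian and `A_μ`
anti-Hermitian, all twice continuously differentiable) such that at `x₀` the amplitude is in
the eigenbasis gauge `W(x₀) = Σ_k √λ_k |φ_k⟩⟨e_k|`, the scalar curvature measure
`𝒞 = −(1/4) g^{μα} g^{νβ} tr(F_{μν} F_{αβ})` built from the Uhlmann curvature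
`F_{μν} = ∂_μ A_ν − ∂_ν A_μ + [A_μ, A_ν]` equals its spectral-decomposition expression in
terms of the commutators `[G_μ, G_ν]`. -/
theorem curvature_measure_spectral_decomposition {d n r : ℕ}
    (U : Set (Fin d → ℝ)) (hU : IsOpen U) (x₀ : Fin d → ℝ) (hx₀ : x₀ ∈ U)
    (W : (Fin d → ℝ) → Matrix (Fin n) (Fin r) ℂ)
    (G : Fin d → (Fin d → ℝ) → Matrix (Fin n) (Fin n) ℂ)
    (A : Fin d → (Fin d → ℝ) → Matrix (Fin r) (Fin r) ℂ)
    (hWC2 : ∀ i j, ContDiffOn ℝ 2 (fun x => W x i j) U)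
    (hGC2 : ∀ μ i j, ContDiffOn ℝ 2 (fun x => G μ x i j) U)
    (hAC2 : ∀ μ i j, ContDiffOn ℝ 2 (fun x => A μ x i j) U)
    (hGHerm : ∀ μ, ∀ x ∈ U, (G μ x).IsHermitian)
    (hAAnti : ∀ μ, ∀ x ∈ U, (A μ x)ᴴ = -(A μ x))
    (hlift : ∀ μ, ∀ x ∈ U, matPDeriv μ W x = G μ x * W x - W x * (A μ x)ᵀ)
    (lam : Fin r → ℝ) (hlam : ∀ k, 0 < lam k)
    (φ : Fin r → (Fin n → ℂ))
    (hortho : ∀ k l, star (φ k) ⬝ᵥ φ l = if k = l then (1 : ℂ) else 0)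
    (hW₀ : W x₀ = Matrix.of fun i k => (Real.sqrt (lam k) : ℂ) * φ k i)
    (g : Matrix (Fin d) (Fin d) ℝ) (hgsymm : g.IsSymm) (hgpos : g.PosDef) :
    -(1/4 : ℂ) * ∑ μ : Fin d, ∑ ν : Fin d, ∑ α : Fin d, ∑ β : Fin d,
        ((g⁻¹ μ α : ℝ) : ℂ) * ((g⁻¹ ν β : ℝ) : ℂ) *
          Matrix.trace
            ((matPDeriv μ (A ν) x₀ - matPDeriv ν (A μ) x₀
                + (A μ x₀ * A ν x₀ - A ν x₀ * A μ x₀)) *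
             (matPDeriv α (A β) x₀ - matPDeriv β (A α) x₀
                + (A α x₀ * A β x₀ - A β x₀ * A α x₀)))
      = -∑ μ : Fin d, ∑ ν : Fin d, ∑ α : Fin d, ∑ β : Fin d,
          ((g⁻¹ μ α : ℝ) : ℂ) * ((g⁻¹ ν β : ℝ) : ℂ) *
            ∑ ℓ : Fin r, ∑ m : Fin r,
              ((lam ℓ * lam m / (lam ℓ + lam m) ^ 2 : ℝ) : ℂ) *
                (star (φ ℓ) ⬝ᵥ (G μ x₀ * G ν x₀ - G ν x₀ * G μ x₀).mulVec (φ m)) *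
                (star (φ m) ⬝ᵥ (G α x₀ * G β x₀ - G β x₀ * G α x₀).mulVec (φ ℓ)) :=
  curvature_measure_spectral_decomposition_general U hU x₀ hx₀ W G A hWC2 hGC2 hAC2 hGHerm hAAnti
    hlift lam hlam φ hortho hW₀ g
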